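/- arXiv:1212.1300 — 6 statements merged into one kernel-verified Lean document; each statement's English description precedes it below -/
import Mathlib

section
/- For any graph G with n vertices and m edges, the Ramsey number r(G) satisfies r(G) > 2^(m/n - 1). -/
/-!
For a fixed embedding `f` of `G` into `K_N` and colour `c`, the colourings of
`K_N` in which the copy `f(G)` is monochromatic in `c` are free only off the `m` edges of `f(G)`, so
there are `2 ^ (S - m)` of them, where `S` is the number of edges of `K_N` (`Sym2` also counts
loops, which changes nothing). If every colouring has a monochromatic copy, these sets cover all
`2 ^ S` colourings, whence `2 ^ m ≤ 2 * N ^ n`, i.e. `2 ^ (m / n) ≤ 2 ^ (1 / n) N`. This is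
strictly below `2 N` unless `n = 1`, where `m = 0`.
-/

open Finset

theorem Fintype.card_filter_forall_mem_eq {α β : Type*} [Fintype α] [DecidableEq α] [Fintype β]
    [DecidableEq β] (s : Finset α) (b : β) :
    #{χ : α → β | ∀ a ∈ s, χ a = b} = Fintype.card β ^ (Fintype.card α - #s) := by
  have : ({χ : α → β | ∀ a ∈ s, χ a = b} : Finset _) =
      Fintype.piFinset fun a => if a ∈ s then {b} else univ := by
    ext χ
    simp only [mem_filter, mem_univ, true_and, Fintype.mem_piFinset]
    refine ⟨fun h a => ?_, fun h a ha => by simpa [ha] using h a⟩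
    split_ifs with ha <;> simp [h a, ha]
  rw [this, Fintype.card_piFinset, ← card_compl]
  simp only [apply_ite Finset.card, card_singleton, card_univ]
  rw [prod_ite, prod_const_one, one_mul, prod_const]
  congr 2
  ext; simp

namespace SimpleGraph

variable {V W κ : Type*}

def HasMonochromaticCopy (G : SimpleGraph V) (χ : Sym2 W → κ) : Prop :=
  ∃ (f : V ↪ W) (c : κ), ∀ e ∈ G.edgeSet, χ (f.sym2Map e) = c

theorem hasMonochromaticCopy_iff {G : SimpleGraph V} {χ : Sym2 W → κ} :
    G.HasMonochromaticCopy χ ↔ ∃ (f : V ↪ W) (c : κ), ∀ u v, G.Adj u v → χ s(f u, f v) = c := by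
  refine exists_congr fun f => exists_congr fun c =>
    ⟨fun h u v huv => by simpa using h s(u, v) huv, fun h e he => ?_⟩
  induction e with
  | _ u v => simpa using h u v he

variable [Fintype V] [Fintype W] [DecidableEq W] [Fintype κ] [Nonempty κ]

theorem card_pow_card_edgeFinset_le (G : SimpleGraph V) [DecidableRel G.Adj]
    (h : ∀ χ : Sym2 W → κ, G.HasMonochromaticCopy χ) :
    Fintype.card κ ^ #G.edgeFinset ≤ Fintype.card κ * Fintype.card (V ↪ W) := by
  classical
  set k := Fintype.card κ
  set m := #G.edgeFinset
  set S := Fintype.card (Sym2 W)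
  set fiber : (V ↪ W) × κ → Finset (Sym2 W → κ) := fun p =>
    {χ | ∀ e ∈ G.edgeFinset.map p.1.sym2Map, χ e = p.2}
  have hcover : univ ⊆ univ.biUnion fiber := by
    intro χ _
    obtain ⟨f, c, hfc⟩ := h χ
    simpa [fiber] using ⟨f, c, fun e he => hfc e he⟩
  have hfiber (p : (V ↪ W) × κ) : #(fiber p) = k ^ (S - m) :=
    (Fintype.card_filter_forall_mem_eq _ _).trans (by rw [card_map])
  have hmS : m ≤ S := by
    obtain ⟨f, -⟩ := h fun _ => Classical.arbitrary κ
    simpa using card_le_univ (G.edgeFinset.map f.sym2Map)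
  have hcount : k ^ m * k ^ (S - m) ≤ (k * Fintype.card (V ↪ W)) * k ^ (S - m) := by
    calc k ^ m * k ^ (S - m) = #(univ : Finset (Sym2 W → κ)) := by
          rw [← pow_add, Nat.add_sub_cancel' hmS, card_univ, Fintype.card_fun]
      _ ≤ #(univ.biUnion fiber) := card_le_card hcover
      _ ≤ #(univ : Finset ((V ↪ W) × κ)) * k ^ (S - m) :=
          card_biUnion_le_card_mul _ _ _ fun p _ => (hfiber p).le
      _ = (k * Fintype.card (V ↪ W)) * k ^ (S - m) := by
          rw [card_univ, Fintype.card_prod]; ring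
  exact Nat.le_of_mul_le_mul_right hcount (pow_pos Fintype.card_pos _)

end SimpleGraph

theorem two_rpow_div_sub_one_lt {m n N : ℕ} (hn : n ≠ 0) (h : 2 ^ m < (2 * N) ^ n) :
    (2 : ℝ) ^ ((m : ℝ) / n - 1) < N := by
  have key : (2 : ℝ) ^ ((m : ℝ) / n) < 2 * N := by
    rw [div_eq_mul_inv, Real.rpow_mul zero_le_two, Real.rpow_natCast]
    refine (pow_lt_pow_iff_left₀ (by positivity) (by positivity) hn).1 ?_
    rw [Real.rpow_inv_natCast_pow (by positivity) hn]
    exact_mod_cast h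
  rw [Real.rpow_sub_one two_ne_zero]
  linarith

/-- For any graph `G` with `n` vertices and `m` edges, the Ramsey number
`r(G)` satisfies `r(G) > 2^(m/n - 1)`. We express this by saying that any `N` such that
every two-coloring of the edges of `K_N` contains a monochromatic copy of `G` (in
particular the Ramsey number itself) exceeds `2^(m/n - 1)`. -/
theorem stmt0 (n m N : ℕ) (hn : 0 < n) (G : SimpleGraph (Fin n)) [DecidableRel G.Adj]
    (hm : G.edgeFinset.card = m)
    (hRamsey : ∀ χ : Fin N → Fin N → Bool, (∀ a b, χ a b = χ b a) →
      ∃ (f : Fin n ↪ Fin N) (c : Bool), ∀ u v : Fin n, G.Adj u v → χ (f u) (f v) = c) :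
    (N : ℝ) > 2 ^ ((m : ℝ) / n - 1) := by
  have hcopy (χ : Sym2 (Fin N) → Bool) : G.HasMonochromaticCopy χ :=
    SimpleGraph.hasMonochromaticCopy_iff.2 <|
      hRamsey (fun a b => χ s(a, b)) fun a b => congrArg χ Sym2.eq_swap
  have hcount : 2 ^ m ≤ 2 * N ^ n := by
    calc 2 ^ m ≤ 2 * Fintype.card (Fin n ↪ Fin N) := by
          simpa [hm] using G.card_pow_card_edgeFinset_le hcopy
      _ ≤ 2 * N ^ n := by
          rw [Fintype.card_embedding_eq, Fintype.card_fin, Fintype.card_fin]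
          exact Nat.mul_le_mul_left _ (Nat.descFactorial_le_pow N n)
  have hnN : n ≤ N := by
    obtain ⟨f, -⟩ := hcopy fun _ => true
    simpa using Fintype.card_le_of_embedding f
  refine two_rpow_div_sub_one_lt hn.ne' ?_
  obtain rfl | hn2 : n = 1 ∨ 2 ≤ n := by omega
  · have hm0 : m = 0 := by simpa [hm] using G.card_edgeFinset_le_card_choose_two
    simp only [hm0, pow_zero, pow_one]
    omega
  · calc 2 ^ m ≤ 2 * N ^ n := hcount
      _ < 2 ^ n * N ^ n := by
          have : 0 < N := by omega
          gcongr
          calc 2 < 2 ^ 2 := by norm_num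
            _ ≤ 2 ^ n := Nat.pow_le_pow_right two_pos hn2
      _ = (2 * N) ^ n := (mul_pow 2 N n).symm
end

section
/- If G is a graph on n vertices such that all but t ≥ 1 of its vertices have degree n−1, then the clique partition number cp(G) is less than t·n. -/
/-!
Let `S` be the set of vertices of degree `≠ n - 1`. The remaining vertices are universal, so
they form one clique, and every other edge meets `S` and can be taken as a clique of its own.
There are at most `∑_{s ∈ S} deg s ≤ t (n - 2)` such edges, so `cp(G) ≤ 1 + t (n - 2) < t n`.
-/

/-- `P` is a clique partition of `G`. -/
def IsCliquePartition {V : Type*} (G : SimpleGraph V) (P : Finset (Finset V)) : Prop :=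
  (∀ Q ∈ P, ∀ u ∈ Q, ∀ v ∈ Q, u ≠ v → G.Adj u v) ∧
  (∀ u v : V, G.Adj u v → ∃! Q : Finset V, Q ∈ P ∧ u ∈ Q ∧ v ∈ Q)

open Finset

lemma Finset.pair_eq_of_mem_pair {α : Type*} [DecidableEq α] {s w u v : α} (huv : u ≠ v)
    (hu : u ∈ ({s, w} : Finset α)) (hv : v ∈ ({s, w} : Finset α)) :
    ({s, w} : Finset α) = {u, v} :=
  (eq_of_subset_of_card_le (insert_subset hu (singleton_subset_iff.mpr hv))
    (by rw [card_pair huv]; exact card_le_two)).symm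

namespace SimpleGraph

variable {V : Type*} [Fintype V] [DecidableEq V] (G : SimpleGraph V) [DecidableRel G.Adj]

def edgesMeeting (S : Finset V) : Finset (Finset V) :=
  S.biUnion fun s => (G.neighborFinset s).image fun w => {s, w}

variable {G}

lemma mem_edgesMeeting {S Q : Finset V} :
    Q ∈ G.edgesMeeting S ↔ ∃ s ∈ S, ∃ w, G.Adj s w ∧ Q = {s, w} := by
  simp only [edgesMeeting, mem_biUnion, mem_image, mem_neighborFinset, eq_comm (a := Q)]

lemma card_edgesMeeting_le (S : Finset V) : #(G.edgesMeeting S) ≤ ∑ s ∈ S, G.degree s :=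
  card_biUnion_le.trans <| sum_le_sum fun s _ => by
    rw [← card_neighborFinset_eq_degree]
    exact card_image_le

lemma isCliquePartition_insert_edgesMeeting {S : Finset V} (hS : G.IsClique (↑Sᶜ : Set V)) :
    IsCliquePartition G (insert Sᶜ (G.edgesMeeting S)) := by
  refine ⟨?_, fun u v huv => ?_⟩
  · rintro Q hQ
    rcases mem_insert.mp hQ with rfl | hQ
    · exact fun u hu v hv => hS hu hv
    obtain ⟨s, -, w, hsw, rfl⟩ := mem_edgesMeeting.mp hQ
    simp only [mem_insert, mem_singleton]
    rintro u (rfl | rfl) v (rfl | rfl) h <;> first | exact absurd rfl h | exact hsw | exact hsw.symm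
  have hne := G.ne_of_adj huv
  have pair_of_mem {Q} (hQ : Q ∈ G.edgesMeeting S) (hu : u ∈ Q) (hv : v ∈ Q) : Q = {u, v} := by
    obtain ⟨s, -, w, -, rfl⟩ := mem_edgesMeeting.mp hQ
    exact pair_eq_of_mem_pair hne hu hv
  by_cases hin : u ∈ Sᶜ ∧ v ∈ Sᶜ
  · refine ⟨Sᶜ, ⟨mem_insert_self _ _, hin⟩, fun Q ⟨hQ, hu, hv⟩ => ?_⟩
    rcases mem_insert.mp hQ with rfl | hQ
    · rfl
    obtain ⟨s, hs, w, -, rfl⟩ := mem_edgesMeeting.mp hQ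
    have hs' : s ∈ ({u, v} : Finset V) := pair_of_mem hQ hu hv ▸ mem_insert_self s {w}
    simp only [mem_insert, mem_singleton] at hs'
    rcases hs' with rfl | rfl
    exacts [absurd hs (mem_compl.mp hin.1), absurd hs (mem_compl.mp hin.2)]
  have hmem : {u, v} ∈ G.edgesMeeting S := by
    rw [mem_edgesMeeting]
    simp only [mem_compl, not_and_or, not_not] at hin
    rcases hin with hu | hv
    · exact ⟨u, hu, v, huv, rfl⟩
    · exact ⟨v, hv, u, huv.symm, pair_comm u v⟩
  refine ⟨{u, v}, ⟨mem_insert_of_mem hmem, by simp, by simp⟩, fun Q ⟨hQ, hu, hv⟩ => ?_⟩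
  rcases mem_insert.mp hQ with rfl | hQ
  exacts [absurd ⟨hu, hv⟩ hin, pair_of_mem hQ hu hv]

end SimpleGraph

open SimpleGraph

/-- If `G` is a graph on `n ≥ 1` vertices such that all but `t ≥ 1` of its
vertices have degree `n - 1`, then `cp(G) < t * n`. -/
theorem stmt2 (n t : ℕ) (hn : 0 < n) (ht : 1 ≤ t) (G : SimpleGraph (Fin n))
    [DecidableRel G.Adj]
    (h : (Finset.univ.filter fun v : Fin n => G.degree v ≠ n - 1).card ≤ t) :
    ∃ P : Finset (Finset (Fin n)), IsCliquePartition G P ∧ P.card < t * n := by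
  set S := univ.filter fun v : Fin n => G.degree v ≠ n - 1
  -- for `n = 1` the edgeless clique `Sᶜ` alone would already reach the bound `t * n = t`
  obtain rfl | hn2 : n = 1 ∨ 2 ≤ n := by omega
  · exact ⟨∅, ⟨by simp, fun u v huv => absurd (Subsingleton.elim u v) (G.ne_of_adj huv)⟩,
      by simp; omega⟩
  have hclique : G.IsClique (↑Sᶜ : Set (Fin n)) := G.isClique_universalVerts.subset fun v hv => by
    have hv : G.degree v = Fintype.card (Fin n) - 1 := by simpa [S] using hv
    exact (degree_eq_card_sub_one G v).mp hv
  have hdeg : ∀ s ∈ S, G.degree s ≤ n - 2 := fun s hs => by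
    have := G.degree_lt_card_verts s
    simp only [S, mem_filter, Fintype.card_fin] at hs this
    omega
  refine ⟨_, isCliquePartition_insert_edgesMeeting hclique, ?_⟩
  obtain ⟨m, rfl⟩ : ∃ m, n = m + 2 := ⟨n - 2, by omega⟩
  calc #(insert Sᶜ (G.edgesMeeting S))
      ≤ ∑ s ∈ S, G.degree s + 1 := card_insert_le _ _ |>.trans (by grw [card_edgesMeeting_le])
    _ ≤ t * m + 1 := by grw [sum_le_sum hdeg, sum_const, smul_eq_mul, h]; simp
    _ < t * (m + 2) := by nlinarith
end

section
/- Let f(n,k) denote the minimum number of cliques, each on at most k vertices, needed to partition the edge set of K_n. Then for √n ≤ k < n, f(n,k) ≥ n/4. -/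
/-!
Let `Q₀` be a largest clique of the partition, of size `m`. A vertex `v ∉ Q₀` is joined to the
`m` vertices of `Q₀` by edges lying in pairwise distinct cliques (two of them in one clique would
put an edge of `Q₀` in a second clique), so `v` lies in at least `m` cliques. Counting incidences
between the `n - m` vertices outside `Q₀` and the cliques gives `(n - m) m ≤ ∑ |Q| ≤ |P| m`,
hence `n - m ≤ |P|`; together with `m ≤ |P|` this yields `n ≤ 2 |P|`.
-/

open Finset

namespace IsCliquePartition

variable {V : Type*} [DecidableEq V] {P : Finset (Finset V)}

theorem card_le_card_filter_mem {G : SimpleGraph V} (hP : IsCliquePartition G P)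
    {Q : Finset V} (hQ : Q ∈ P) {v : V} (hv : ∀ u ∈ Q, G.Adj u v) :
    #Q ≤ #{R ∈ P | v ∈ R} := by
  refine card_le_card_of_forall_subsingleton (fun u R ↦ u ∈ R) (fun u hu ↦ ?_) ?_
  · obtain ⟨R, ⟨hR, huR, hvR⟩, -⟩ := hP.2 u v (hv u hu)
    exact ⟨R, mem_filter.2 ⟨hR, hvR⟩, huR⟩
  · intro R hR u₁ ⟨hu₁Q, hu₁R⟩ u₂ ⟨hu₂Q, hu₂R⟩
    by_contra hne
    have hRQ : R = Q := (hP.2 u₁ u₂ (hP.1 Q hQ u₁ hu₁Q u₂ hu₂Q hne)).unique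
      ⟨(mem_filter.1 hR).1, hu₁R, hu₂R⟩ ⟨hQ, hu₁Q, hu₂Q⟩
    have hvQ : v ∈ Q := hRQ ▸ (mem_filter.1 hR).2
    exact (hv v hvQ).ne rfl

theorem card_le_card_of_notMem (hP : IsCliquePartition (⊤ : SimpleGraph V) P)
    {Q : Finset V} (hQ : Q ∈ P) {v : V} (hv : v ∉ Q) : #Q ≤ #P :=
  (hP.card_le_card_filter_mem hQ fun _ hu ↦ by simpa using ne_of_mem_of_not_mem hu hv).trans
    (card_filter_le _ _)

variable [Fintype V]

theorem card_sub_le_card (hP : IsCliquePartition (⊤ : SimpleGraph V) P)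
    {Q₀ : Finset V} (hQ₀ : Q₀ ∈ P) (hmax : ∀ Q ∈ P, #Q ≤ #Q₀) (hne : Q₀.Nonempty) :
    Fintype.card V - #Q₀ ≤ #P := by
  have hlow : #Q₀ᶜ * #Q₀ ≤ ∑ R ∈ P, #(Q₀ᶜ ∩ R) :=
    le_sum_card_inter fun v hv ↦ hP.card_le_card_filter_mem hQ₀ fun _ hu ↦ by
      simpa using ne_of_mem_of_not_mem hu (mem_compl.1 hv)
  have hupp : ∑ R ∈ P, #(Q₀ᶜ ∩ R) ≤ #P * #Q₀ := by
    simpa using sum_le_sum fun R hR ↦ (card_le_card inter_subset_right).trans (hmax R hR)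
  rw [card_compl] at hlow
  exact Nat.le_of_mul_le_mul_right (hlow.trans hupp) hne.card_pos

theorem card_le_two_mul_card (hP : IsCliquePartition (⊤ : SimpleGraph V) P)
    (hV : 1 < Fintype.card V) (hproper : ∀ Q ∈ P, #Q < Fintype.card V) :
    Fintype.card V ≤ 2 * #P := by
  obtain ⟨a, b, hab⟩ := Fintype.exists_pair_of_one_lt_card hV
  obtain ⟨Q₁, hQ₁, haQ₁, -⟩ := (hP.2 a b (by simpa using hab)).exists
  obtain ⟨Q₀, hQ₀, hmax⟩ := exists_max_image P card ⟨Q₁, hQ₁⟩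
  have hne : Q₀.Nonempty := card_pos.1 ((card_pos.2 ⟨a, haQ₁⟩).trans_le (hmax Q₁ hQ₁))
  obtain ⟨w, hw⟩ : ∃ w, w ∉ Q₀ := by
    by_contra! h
    exact (hproper Q₀ hQ₀).ne (by rw [eq_univ_of_forall h, card_univ])
  have := hP.card_le_card_of_notMem hQ₀ hw
  have := hP.card_sub_le_card hQ₀ hmax hne
  omega

end IsCliquePartition

/-- Any partition of the edge set of `K_n` into cliques each on at most `k`
vertices, where `√n ≤ k < n`, uses at least `n/4` cliques. -/
theorem stmt4 (n k : ℕ) (hk : Real.sqrt n ≤ k) (hkn : k < n)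
    (P : Finset (Finset (Fin n))) (hP : IsCliquePartition (⊤ : SimpleGraph (Fin n)) P)
    (hsize : ∀ Q ∈ P, Q.card ≤ k) :
    (n : ℝ) / 4 ≤ P.card := by
  have hn : 1 < n := by
    by_contra h
    obtain rfl : n = 1 := by omega
    obtain rfl : k = 0 := by omega
    norm_num at hk
  have hcard : n ≤ 2 * P.card := by
    simpa using hP.card_le_two_mul_card (by simpa using hn)
      fun Q hQ ↦ by simpa using (hsize Q hQ).trans_lt hkn
  have hcard' : (n : ℝ) ≤ 2 * P.card := by exact_mod_cast hcard
  linarith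
end

section
/- Let T be a tree on n vertices and 2 ≤ k ≤ n. Then there exists a tree partition {T_1, ..., T_r} of T into at most 2n/k trees such that each T_i has between k/3 and k vertices. -/
/-!
Call `S ⊆ A` a branch of `A` at `v ∈ S` if `A` splits at `v` into the connected sets `S` and
`(A \ S) ∪ {v}`. Descending into components of `A` minus a vertex, a connected set with at least
`p ≥ 2` vertices has a branch with between `p` and `max p (2p - 3)` vertices. Cutting off branches
with between `⌈k/2⌉ + 1` and `k` vertices, each of which uses up at least `⌈k/2⌉` vertices of the
tree because it shares only its cut vertex with the rest, and splitting the final remainder into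
two branches of sizes in `[k/3, k]`, gives at most `2n/k` pieces. In a tree these pieces are
subtrees, and every edge lies in one of them: an edge from `S \ {v}` to the rest would close a
cycle through `v`.
-/

namespace SimpleGraph

variable {V : Type*} {G : SimpleGraph V} {s : Set V} {u x y : V}

theorem Preconnected.exists_walk_support_subset (h : (G.induce s).Preconnected) (hx : x ∈ s)
    (hy : y ∈ s) : ∃ p : G.Walk x y, ∀ z ∈ p.support, z ∈ s := by
  obtain ⟨p⟩ := h ⟨x, hx⟩ ⟨y, hy⟩
  refine ⟨p.map (Embedding.induce s).toHom, fun z hz => ?_⟩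
  erw [Walk.support_map] at hz
  obtain ⟨⟨z, hzs⟩, -, rfl⟩ := List.mem_map.mp hz
  exact hzs

theorem connected_induce_of_forall_walk (hu : u ∈ s)
    (h : ∀ y ∈ s, ∃ p : G.Walk u y, ∀ z ∈ p.support, z ∈ s) : (G.induce s).Connected :=
  induce_connected_of_patches u hu fun hy => by
    obtain ⟨p, hp⟩ := h _ hy
    exact ⟨_, hp, p.start_mem_support, p.end_mem_support,
      p.connected_induce_support.preconnected _ _⟩

theorem connected_induce_singleton (v : V) : (G.induce {v}).Connected :=
  connected_induce_of_forall_walk rfl fun _ hy => by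
    rw [Set.mem_singleton_iff] at hy
    exact hy ▸ ⟨Walk.nil, by simp⟩

theorem IsAcyclic.not_adj_of_preconnected (hG : G.IsAcyclic) {S B : Set V}
    (hS : (G.induce S).Preconnected) (hB : (G.induce B).Preconnected) (hSB : (S ∩ B).Nonempty)
    {u w : V} (hu : u ∈ S) (huB : u ∉ B) (hw : w ∈ B) (hwS : w ∉ S) : ¬G.Adj u w := by
  intro hadj
  obtain ⟨v, hvS, hvB⟩ := hSB
  obtain ⟨p, hp⟩ := hS.exists_walk_support_subset hu hvS
  obtain ⟨q, hq⟩ := hB.exists_walk_support_subset hvB hw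
  -- in a forest `uw` is a bridge, yet the walk through `v` would avoid it
  have := isBridge_iff_forall_walk_mem_edges.mp (isAcyclic_iff_forall_adj_isBridge.mp hG hadj)
    (p.append q)
  rw [Walk.edges_append] at this
  rcases List.mem_append.mp this with he | he
  · exact hwS (hp _ (p.snd_mem_support_of_mem_edges he))
  · exact huB (hq _ (q.fst_mem_support_of_mem_edges he))

/-- The vertex set of the connected component of `u` in `G[s]` (empty if `u ∉ s`). -/
def reachWithin (G : SimpleGraph V) (s : Set V) (u : V) : Set V :=
  {y | ∃ p : G.Walk u y, ∀ z ∈ p.support, z ∈ s}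

theorem reachWithin_subset : G.reachWithin s u ⊆ s :=
  fun _ ⟨p, hp⟩ => hp _ p.end_mem_support

theorem mem_reachWithin_self (hu : u ∈ s) : u ∈ G.reachWithin s u :=
  ⟨Walk.nil, by simpa using hu⟩

theorem connected_induce_reachWithin (hu : u ∈ s) : (G.induce (G.reachWithin s u)).Connected :=
  connected_induce_of_forall_walk (mem_reachWithin_self hu) fun _ ⟨p, hp⟩ => by
    classical
    exact ⟨p, fun z hz =>
      ⟨p.takeUntil z hz, fun x hx => hp x (p.support_takeUntil_subset_support hz hx)⟩⟩

theorem connected_induce_sdiff_reachWithin {A : Set V} (hA : (G.induce A).Connected) {ρ : V}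
    (hρ : ρ ∈ A) (u : V) : (G.induce (A \ G.reachWithin (A \ {ρ}) u)).Connected := by
  classical
  have hρC : ρ ∉ G.reachWithin (A \ {ρ}) u := fun h => (reachWithin_subset h).2 rfl
  refine connected_induce_of_forall_walk ⟨hρ, hρC⟩ fun x ⟨hxA, hxC⟩ => ?_
  obtain ⟨q, hq⟩ := hA.preconnected.exists_walk_support_subset hxA hρ
  refine ⟨q.bypass.reverse, fun z hz => ?_⟩
  rw [Walk.support_reverse, List.mem_reverse] at hz
  refine ⟨hq z (q.support_bypass_subset_support hz), fun ⟨p, hp⟩ => hxC ?_⟩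
  -- the path from `x` to `ρ` meets `ρ` only at its end, so its part up to `z` avoids `ρ`
  have hzρ : z ≠ ρ := (hp z p.end_mem_support).2
  refine ⟨p.append (q.bypass.takeUntil z hz).reverse, fun y hy => ?_⟩
  rw [Walk.mem_support_append_iff, Walk.support_reverse, List.mem_reverse] at hy
  rcases hy with hy | hy
  · exact hp y hy
  · refine ⟨hq y (q.support_bypass_subset_support
      (q.bypass.support_takeUntil_subset_support hz hy)), ?_⟩
    rintro rfl
    exact Walk.endpoint_notMem_support_takeUntil q.bypass_isPath hz hzρ.symm hy

structure IsBranch (G : SimpleGraph V) (A S : Set V) (v : V) : Prop where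
  mem : v ∈ S
  subset : S ⊆ A
  connected : (G.induce S).Connected
  connected_rest : (G.induce (insert v (A \ S))).Connected

theorem isBranch_self {A : Set V} (hA : (G.induce A).Connected) {v : V} (hv : v ∈ A) :
    G.IsBranch A A v :=
  ⟨hv, subset_rfl, hA, by rw [Set.sdiff_self, insert_empty_eq]; exact connected_induce_singleton v⟩

theorem isBranch_insert {A C : Set V} {ρ u : V} (hρ : ρ ∈ A) (hCA : C ⊆ A) (hρC : ρ ∉ C)
    (hC : (G.induce C).Connected) (hAC : (G.induce (A \ C)).Connected) (huC : u ∈ C)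
    (hρu : G.Adj ρ u) : G.IsBranch A (insert ρ C) ρ := by
  refine ⟨Set.mem_insert ρ C, Set.insert_subset hρ hCA, ?_, ?_⟩
  · rw [Set.insert_eq]
    exact connected_induce_union (connected_induce_singleton ρ).preconnected hC.preconnected
      rfl huC hρu
  · have hrest : insert ρ (A \ insert ρ C) = A \ C := by
      ext y
      by_cases hy : y = ρ <;> simp [hy, hρ, hρC]
    rwa [hrest]

theorem IsBranch.of_subset {A X S : Set V} {v r b : V} (h : G.IsBranch X S v) (hXA : X ⊆ A)
    (hAX : (G.induce (A \ X)).Connected) (hr : r ∈ X) (hb : b ∈ A \ X) (hrb : G.Adj r b)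
    (hrS : r ∉ S ∨ r = v) : G.IsBranch A S v := by
  refine ⟨h.mem, h.subset.trans hXA, h.connected, ?_⟩
  have hrest : insert v (A \ S) = insert v (X \ S) ∪ (A \ X) := by
    ext y
    have := @h.subset y
    have := @hXA y
    simp only [Set.mem_insert_iff, Set.mem_sdiff, Set.mem_union]
    tauto
  have hr' : r ∈ insert v (X \ S) := by
    rcases hrS with hrS | rfl
    exacts [Or.inr ⟨hr, hrS⟩, Set.mem_insert r _]
  rw [hrest]
  exact connected_induce_union h.connected_rest.preconnected hAX.preconnected hr' hb hrb

theorem IsBranch.ncard_rest_add_ncard [Finite V] {A S : Set V} {v : V} (h : G.IsBranch A S v) :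
    (insert v (A \ S)).ncard + S.ncard = A.ncard + 1 := by
  rw [Set.ncard_insert_of_notMem fun hv => hv.2 h.mem, add_right_comm,
    Set.ncard_sdiff_add_ncard_of_subset h.subset]

theorem IsBranch.mem_of_adj_of_notMem_rest (hG : G.IsAcyclic) {A S : Set V} {v u w : V}
    (h : G.IsBranch A S v) (huw : G.Adj u w) (hu : u ∈ A) (hw : w ∈ A)
    (hu' : u ∉ insert v (A \ S)) : u ∈ S ∧ w ∈ S := by
  have huS : u ∈ S := by by_contra huS; exact hu' (Or.inr ⟨hu, huS⟩)
  refine ⟨huS, by_contra fun hwS => ?_⟩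
  exact hG.not_adj_of_preconnected h.connected.preconnected h.connected_rest.preconnected
    ⟨v, h.mem, Set.mem_insert v _⟩ huS hu' (Or.inr ⟨hw, hwS⟩) hwS huw

/-- With `C` the component of a neighbour `u` of `ρ` in `A \ {ρ}`: recurse into `C` if it is large,
take `insert ρ C` if it has `p - 1` vertices, else recurse into `A \ C`, or take all of `A` when
both are small. Keeping `ρ` out of `S \ {v}` lets a branch found inside a part be reattached. -/
theorem exists_isBranch_of_le_ncard [Finite V] {p : ℕ} (hp : 2 ≤ p) {A : Set V}
    (hA : (G.induce A).Connected) {ρ : V} (hρ : ρ ∈ A) (hpA : p ≤ A.ncard) :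
    ∃ S v, G.IsBranch A S v ∧ (ρ ∉ S ∨ ρ = v) ∧ p ≤ S.ncard ∧ S.ncard ≤ max p (2 * p - 3) := by
  induction hm : A.ncard using Nat.strong_induction_on generalizing A ρ with
  | _ m ih =>
  have : Nontrivial A := (Set.one_lt_ncard_iff_nontrivial.mp (by omega : 1 < A.ncard)).coe_sort
  obtain ⟨⟨u, huA⟩, hρu⟩ := hA.preconnected.exists_adj_of_nontrivial ⟨ρ, hρ⟩
  replace hρu : G.Adj ρ u := hρu
  set C := G.reachWithin (A \ {ρ}) u
  have hCsub : C ⊆ A \ {ρ} := reachWithin_subset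
  have huC : u ∈ C := mem_reachWithin_self ⟨huA, hρu.ne'⟩
  have hρC : ρ ∉ C := fun h => (hCsub h).2 rfl
  have hCA : C ⊆ A := hCsub.trans Set.sdiff_subset
  have hC : (G.induce C).Connected := connected_induce_reachWithin ⟨huA, hρu.ne'⟩
  have hAC : (G.induce (A \ C)).Connected := connected_induce_sdiff_reachWithin hA hρ u
  have hcard : (A \ C).ncard + C.ncard = m :=
    hm ▸ Set.ncard_sdiff_add_ncard_of_subset hCA
  have hCm : C.ncard < m := hm ▸ Set.ncard_lt_ncard ⟨hCA, fun h => hρC (h hρ)⟩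
  have hCpos : 0 < C.ncard := (Set.ncard_pos).mpr ⟨u, huC⟩
  by_cases hpC : p ≤ C.ncard
  · obtain ⟨S, v, hS, huS, hbounds⟩ := ih _ hCm hC huC hpC rfl
    exact ⟨S, v, hS.of_subset hCA hAC huC ⟨hρ, hρC⟩ hρu.symm huS,
      Or.inl fun h => hρC (hS.subset h), hbounds⟩
  by_cases hCp : C.ncard = p - 1
  · refine ⟨insert ρ C, ρ, isBranch_insert hρ hCA hρC hC hAC huC hρu, Or.inr rfl, ?_⟩
    rw [Set.ncard_insert_of_notMem hρC]
    omega
  by_cases hpAC : p ≤ (A \ C).ncard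
  · obtain ⟨S, v, hS, hρS, hbounds⟩ := ih _ (by omega) hAC ⟨hρ, hρC⟩ hpAC rfl
    refine ⟨S, v, hS.of_subset Set.sdiff_subset ?_ ⟨hρ, hρC⟩ ?_ hρu hρS, hρS, hbounds⟩
    · rwa [Set.sdiff_sdiff_cancel_left hCA]
    · exact ⟨huA, fun h => h.2 huC⟩
  · exact ⟨A, ρ, isBranch_self hA hρ, Or.inr rfl, by omega, by omega⟩

/-- A tree partition of `G[A]`, recorded by the vertex sets of its trees; in a forest the
subgraph induced by a connected set is a tree. -/
structure IsTreePartition (G : SimpleGraph V) (A : Set V) {r : ℕ} (P : Fin r → Set V) :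
    Prop where
  subset : ∀ i, P i ⊆ A
  connected : ∀ i, (G.induce (P i)).Connected
  exists_mem_of_adj : ∀ ⦃u w⦄, G.Adj u w → u ∈ A → w ∈ A → ∃ i, u ∈ P i ∧ w ∈ P i
  subsingleton_inter : Pairwise fun i j => (P i ∩ P j).Subsingleton

theorem IsTreePartition.existsUnique_of_adj {A : Set V} {r : ℕ} {P : Fin r → Set V}
    (hP : G.IsTreePartition A P) {u w : V} (huw : G.Adj u w) (hu : u ∈ A) (hw : w ∈ A) :
    ∃! i, u ∈ P i ∧ w ∈ P i := by
  obtain ⟨i, hi⟩ := hP.exists_mem_of_adj huw hu hw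
  refine ⟨i, hi, fun j hj => by_contra fun hji => huw.ne ?_⟩
  exact hP.subsingleton_inter hji ⟨hj.1, hi.1⟩ ⟨hj.2, hi.2⟩

theorem isTreePartition_single {A : Set V} (hA : (G.induce A).Connected) :
    G.IsTreePartition A fun _ : Fin 1 => A :=
  ⟨fun _ => subset_rfl, fun _ => hA, fun _ _ _ hu hw => ⟨0, hu, hw⟩,
    fun i j hij => absurd (Subsingleton.elim i j) hij⟩

theorem IsTreePartition.cons (hG : G.IsAcyclic) {A S : Set V} {v : V} {r : ℕ}
    {P : Fin r → Set V} (hS : G.IsBranch A S v) (hP : G.IsTreePartition (insert v (A \ S)) P) :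
    G.IsTreePartition A (Fin.cons S P : Fin (r + 1) → Set V) := by
  have hrest : insert v (A \ S) ⊆ A := Set.insert_subset (hS.subset hS.mem) Set.sdiff_subset
  refine ⟨Fin.cases hS.subset fun i => (hP.subset i).trans hrest,
    Fin.cases hS.connected hP.connected, fun u w huw hu hw => ?_, ?_⟩
  · by_cases hu' : u ∈ insert v (A \ S)
    · by_cases hw' : w ∈ insert v (A \ S)
      · obtain ⟨i, hi⟩ := hP.exists_mem_of_adj huw hu' hw'
        exact ⟨i.succ, hi⟩
      · exact ⟨0, (hS.mem_of_adj_of_notMem_rest hG huw.symm hw hu hw').symm⟩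
    · exact ⟨0, hS.mem_of_adj_of_notMem_rest hG huw hu hw hu'⟩
  · have hSrest : S ∩ insert v (A \ S) ⊆ {v} := by
      rintro y ⟨hyS, rfl | ⟨-, hyS'⟩⟩
      exacts [rfl, absurd hyS hyS']
    have hSP : ∀ i, (S ∩ P i).Subsingleton := fun i =>
      Set.subsingleton_singleton.anti
        ((Set.inter_subset_inter_right S (hP.subset i)).trans hSrest)
    intro i j hij
    induction i using Fin.cases <;> induction j using Fin.cases
    · exact absurd rfl hij
    · exact hSP _
    · simpa [Set.inter_comm] using hSP _
    · exact hP.subsingleton_inter (fun h => hij (congrArg Fin.succ h))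

theorem exists_isTreePartition [Finite V] (hG : G.IsAcyclic) {k : ℕ} (hk : 2 ≤ k) {A : Set V}
    (hA : (G.induce A).Connected) (hkA : (k + 1) / 2 ≤ A.ncard) :
    ∃ (r : ℕ) (P : Fin r → Set V), G.IsTreePartition A P ∧ r * ((k + 1) / 2) ≤ A.ncard ∧
      ∀ i, k ≤ 3 * (P i).ncard ∧ (P i).ncard ≤ k := by
  induction hm : A.ncard using Nat.strong_induction_on generalizing A with
  | _ m ih =>
  set s := (k + 1) / 2
  by_cases hmk : m ≤ k
  · exact ⟨1, _, isTreePartition_single hA, by omega, fun _ => ⟨by omega, by omega⟩⟩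
  obtain ⟨ρ, hρ⟩ := hA.nonempty
  by_cases hbig : s + max (s + 1) (2 * (s + 1) - 3) ≤ m + 1
  · obtain ⟨S, v, hS, -, hSlo, hShi⟩ :=
      exists_isBranch_of_le_ncard (p := s + 1) (by omega) hA hρ (by omega)
    have hcard := hS.ncard_rest_add_ncard
    obtain ⟨r, P, hP, hr, hPsize⟩ :=
      ih _ (by omega) hS.connected_rest (by omega) rfl
    refine ⟨r + 1, _, hP.cons hG hS, by rw [add_mul]; omega,
      Fin.cases (by rw [Fin.cons_zero]; omega) fun i => by rw [Fin.cons_succ]; exact hPsize i⟩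
  · -- this `p` gives both `S` and the rest between `k/3` and `k` vertices
    obtain ⟨S, v, hS, -, hSlo, hShi⟩ :=
      exists_isBranch_of_le_ncard (p := max ((k + 2) / 3) (m + 1 - k)) (by omega) hA hρ (by omega)
    have hcard := hS.ncard_rest_add_ncard
    refine ⟨2, _, (isTreePartition_single hS.connected_rest).cons hG hS, by omega,
      Fin.cases (by rw [Fin.cons_zero]; omega) fun _ => by rw [Fin.cons_succ]; omega⟩

end SimpleGraph

open SimpleGraph in
/-- Let `T` be a tree on `n` vertices and `2 ≤ k ≤ n`. Then there is a tree
partition of `T` into `r ≤ 2n/k` subtrees `T_1, ..., T_r`, each edge of `T` lying in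
exactly one subtree, distinct subtrees sharing at most one vertex, and each subtree
having between `k/3` and `k` vertices. -/
theorem stmt11 (n k : ℕ) (hk2 : 2 ≤ k) (hkn : k ≤ n)
    (T : SimpleGraph (Fin n)) (hT : T.IsTree) :
    ∃ (r : ℕ) (f : Fin r → T.Subgraph),
      (r : ℝ) ≤ 2 * n / k ∧
      (∀ i, ((f i).coe).Connected ∧ ((f i).coe).IsAcyclic) ∧
      (∀ u v : Fin n, T.Adj u v → ∃! i, (f i).Adj u v) ∧
      (∀ i j, i ≠ j → ((f i).verts ∩ (f j).verts).ncard ≤ 1) ∧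
      (∀ i, (k : ℝ) / 3 ≤ ((f i).verts.ncard : ℝ) ∧ (f i).verts.ncard ≤ k) := by
  obtain ⟨r, P, hP, hr, hsize⟩ := exists_isTreePartition hT.isAcyclic hk2
    ((induceUnivIso T).connected_iff.mpr hT.connected) (by simp; omega)
  rw [Set.ncard_univ, Nat.card_fin] at hr
  refine ⟨r, fun i => (⊤ : T.Subgraph).induce (P i), ?_, fun i => ⟨?_, ?_⟩, ?_, ?_, fun i => ?_⟩
  · rw [le_div_iff₀ (by positivity)]
    exact_mod_cast (by nlinarith [Nat.mul_le_mul_left r (by omega : k ≤ 2 * ((k + 1) / 2))] :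
      r * k ≤ 2 * n)
  · exact (connected_induce_iff.mp (hP.connected i)).coe
  · rw [← induce_eq_coe_induce_top]
    exact hT.isAcyclic.induce _
  · intro u v huv
    obtain ⟨i, hi, huniq⟩ := hP.existsUnique_of_adj huv trivial trivial
    exact ⟨i, ⟨hi.1, hi.2, huv⟩, fun j hj => huniq j ⟨hj.1, hj.2.1⟩⟩
  · intro i j hij
    exact Set.ncard_le_one_iff_subsingleton.mpr (hP.subsingleton_inter hij)
  · obtain ⟨hlo, hhi⟩ := hsize i
    refine ⟨?_, hhi⟩
    rw [div_le_iff₀ (by norm_num)]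
    exact_mod_cast (by omega : k ≤ (P i).ncard * 3)
end

section
/- In any partition of the edge set of K_n into cliques, if the largest clique has s vertices, all other cliques have at most t vertices, s·t < n, and √n ≤ s, then the number of cliques in the partition exceeds n. -/
open Finset

namespace IsCliquePartition

variable {V : Type*} {G : SimpleGraph V} {P : Finset (Finset V)}

theorem pairwiseDisjoint_offDiag (hP : IsCliquePartition G P) :
    (P : Set (Finset V)).PairwiseDisjoint offDiag := by
  intro Q hQ R hR hQR
  rw [Function.onFun, disjoint_left]
  rintro ⟨u, v⟩ huvQ huvR
  rw [mem_offDiag] at huvQ huvR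
  obtain ⟨_, -, huniq⟩ := hP.2 u v (hP.1 Q hQ u huvQ.1 v huvQ.2.1 huvQ.2.2)
  exact hQR ((huniq Q ⟨hQ, huvQ.1, huvQ.2.1⟩).trans (huniq R ⟨hR, huvR.1, huvR.2.1⟩).symm)

section Fintype

variable [Fintype V] [DecidableEq V] [DecidableRel G.Adj]

theorem biUnion_offDiag (hP : IsCliquePartition G P) :
    P.biUnion offDiag = ({p : V × V | G.Adj p.1 p.2} : Finset (V × V)) := by
  ext ⟨u, v⟩
  simp only [mem_biUnion, mem_offDiag, mem_filter, mem_univ, true_and]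
  constructor
  · rintro ⟨Q, hQ, hu, hv, huv⟩
    exact hP.1 Q hQ u hu v hv huv
  · intro huv
    obtain ⟨Q, ⟨hQ, hu, hv⟩, -⟩ := hP.2 u v huv
    exact ⟨Q, hQ, hu, hv, huv.ne⟩

theorem sum_card_offDiag (hP : IsCliquePartition G P) :
    ∑ Q ∈ P, #Q.offDiag = #{p : V × V | G.Adj p.1 p.2} := by
  rw [← card_biUnion hP.pairwiseDisjoint_offDiag, hP.biUnion_offDiag]

theorem sum_card_offDiag_of_top (hP : IsCliquePartition ⊤ P) :
    ∑ Q ∈ P, #Q.offDiag = Fintype.card V * (Fintype.card V - 1) := by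
  have hpairs : ({p : V × V | (⊤ : SimpleGraph V).Adj p.1 p.2} : Finset (V × V)) =
      (univ : Finset V).offDiag := by
    ext ⟨u, v⟩
    simp
  rw [hP.sum_card_offDiag, hpairs, offDiag_card, card_univ, Nat.mul_sub_one]

end Fintype

end IsCliquePartition

theorem Finset.card_offDiag_le_of_card_le {α : Type*} [DecidableEq α] {s : Finset α} {k : ℕ}
    (h : #s ≤ k) : #s.offDiag ≤ k * (k - 1) := by
  rw [offDiag_card, ← Nat.mul_sub_one]
  gcongr

theorem mul_pred_add_lt_mul_pred {n s t : ℕ} (ht : 2 ≤ t) (hst : s * t < n) (hns : n ≤ s ^ 2) :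
    s * (s - 1) + (n - 1) * (t * (t - 1)) < n * (n - 1) := by
  have hs : 1 ≤ s := by nlinarith
  have h2s : 2 * s < n := by nlinarith
  zify [hs, h2s.le, (by omega : 1 ≤ t), (by omega : 1 ≤ n)] at *
  have hst' : (s : ℤ) * t ≤ n - 1 := by omega
  have key : (s : ℤ) ^ 2 * ((n - 1) * (t * (t - 1))) < s ^ 2 * ((n - s) * (n + s - 1)) :=
    calc (s : ℤ) ^ 2 * ((n - 1) * (t * (t - 1))) = (n - 1) * (s * t) * (s * t - s) := by ring
      _ ≤ (n - 1) * (n - 1) * (n - 1 - s) := by gcongr <;> nlinarith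
      _ < (n - 1) * (n - 1) * (n - s) := by gcongr <;> nlinarith
      _ ≤ n * (n + s - 1) * (n - s) := by gcongr <;> nlinarith
      _ ≤ s ^ 2 * (n + s - 1) * (n - s) := by gcongr <;> nlinarith
      _ = s ^ 2 * ((n - s) * (n + s - 1)) := by ring
  nlinarith [lt_of_mul_lt_mul_left key (sq_nonneg _)]

theorem stmt16_general (n s t : ℕ) (ht2 : 2 ≤ t)
    (P : Finset (Finset (Fin n))) (hP : IsCliquePartition (⊤ : SimpleGraph (Fin n)) P)
    (Q₀ : Finset (Fin n)) (hQ₀ : Q₀ ∈ P) (hs : Q₀.card = s)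
    (ht : ∀ Q ∈ P, Q ≠ Q₀ → Q.card ≤ t)
    (hst : s * t < n) (hsn : Real.sqrt n ≤ s) :
    n < P.card := by
  have hns : n ≤ s ^ 2 := by exact_mod_cast (Real.sqrt_le_iff.mp hsn).2
  have hrest : ∑ Q ∈ P.erase Q₀, #Q.offDiag ≤ (#P - 1) * (t * (t - 1)) := by
    rw [← card_erase_of_mem hQ₀, ← smul_eq_mul]
    exact sum_le_card_nsmul _ _ _ fun Q hQ =>
      card_offDiag_le_of_card_le (ht Q (mem_of_mem_erase hQ) (ne_of_mem_erase hQ))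
  have hcount : n * (n - 1) ≤ s * (s - 1) + (#P - 1) * (t * (t - 1)) :=
    calc n * (n - 1) = ∑ Q ∈ P, #Q.offDiag := by
          rw [hP.sum_card_offDiag_of_top, Fintype.card_fin]
      _ = #Q₀.offDiag + ∑ Q ∈ P.erase Q₀, #Q.offDiag := (add_sum_erase P _ hQ₀).symm
      _ ≤ s * (s - 1) + (#P - 1) * (t * (t - 1)) :=
          add_le_add (card_offDiag_le_of_card_le hs.le) hrest
  by_contra! hP_le
  refine (mul_pred_add_lt_mul_pred ht2 hst hns).not_ge (hcount.trans ?_)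
  gcongr

/-- In any partition of the edge set of `K_n` into cliques, if the largest
clique `Q₀` has `s` vertices, all other cliques have at most `t` vertices (the second
largest clique having `t ≥ 2` vertices), `s·t < n` and `√n ≤ s`, then the number of
cliques in the partition exceeds `n`. -/
theorem stmt16 (n s t : ℕ) (ht2 : 2 ≤ t)
    (P : Finset (Finset (Fin n))) (hP : IsCliquePartition (⊤ : SimpleGraph (Fin n)) P)
    (Q₀ : Finset (Fin n)) (hQ₀ : Q₀ ∈ P) (hs : Q₀.card = s)
    (hmax : ∀ Q ∈ P, Q.card ≤ s)
    (ht : ∀ Q ∈ P, Q ≠ Q₀ → Q.card ≤ t)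
    (hst : s * t < n) (hsn : Real.sqrt n ≤ s) :
    n < P.card :=
  stmt16_general n s t ht2 P hP Q₀ hQ₀ hs ht hst hsn
end

section
/- Let 𝒢 be a K_{s+1}^{(3)}-free 3-uniform hypergraph, let v_1, ..., v_m be vertices, let W be a nonempty set of further vertices, and suppose that for all i < j whether {v_i, v_j, w} is an edge is independent of the choice of w ∈ W ∪ {v_{j+1},...,v_m}. Define an auxiliary graph G on {v_1,...,v_m} joining v_i and v_j if the triples {v_i, v_j, w}, w ∈ W ∪ {v_{j+1},...,v_m}, are all edges. Then G is K_s-free, since any s vertices forming a clique in G together with any w ∈ W would span a complete 3-uniform hypergraph K_{s+1}^{(3)} in 𝒢. -/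
lemma exists_sorted3' {α : Type*} [LinearOrder α] [DecidableEq α] (a b c : α) (hab : a ≠ b) (hac : a ≠ c)
    (hbc : b ≠ c) : ∃ i j k : α, i < j ∧ j < k ∧ ({a, b, c} : Finset α) = {i, j, k} := by
  rcases lt_trichotomy a b with h1 | rfl | h1
  · rcases lt_trichotomy b c with h2 | rfl | h2
    · exact ⟨a, b, c, h1, h2, rfl⟩
    · exact absurd rfl hbc
    · rcases lt_trichotomy a c with h3 | rfl | h3
      · exact ⟨a, c, b, h3, h2, by ext x; simp; tauto⟩
      · exact absurd rfl hac
      · exact ⟨c, a, b, h3, h1, by ext x; simp; tauto⟩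
  · exact absurd rfl hab
  · rcases lt_trichotomy a c with h2 | rfl | h2
    · exact ⟨b, a, c, h1, h2, by ext x; simp; tauto⟩
    · exact absurd rfl hac
    · rcases lt_trichotomy b c with h3 | rfl | h3
      · exact ⟨b, c, a, h3, h2, by ext x; simp; tauto⟩
      · exact absurd rfl hbc
      · exact ⟨c, b, a, h3, h1, by ext x; simp; tauto⟩

/-- Let `𝒢` be a `K_{s+1}^{(3)}`-free 3-uniform hypergraph, `v 0, ..., v (m-1)`
distinct vertices, `W` a nonempty set of further vertices, such that for `i < j` whether
`{v i, v j, w}` is an edge does not depend on the choice of `w` in `W ∪ {v k : k > j}`.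
Then: (a) if `S` is a set of `s` indices which is a clique in the auxiliary graph
(i.e. for `i < j` in `S` all triples `{v i, v j, w}` with `w ∈ W ∪ {v k : k > j}` are
edges), then for any `w ∈ W` the `s + 1` vertices `{v i : i ∈ S} ∪ {w}` span a complete
3-uniform hypergraph `K_{s+1}^{(3)}` in `𝒢`; and (b) hence the auxiliary graph is
`K_s`-free: no such `S` exists. -/
theorem stmt18 {V : Type*} [DecidableEq V] (𝒢 : Set (Finset V)) (s m : ℕ)
    (h3 : ∀ e ∈ 𝒢, e.card = 3)
    (hfree : ¬∃ A : Finset V, A.card = s + 1 ∧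
      ∀ e : Finset V, e ⊆ A → e.card = 3 → e ∈ 𝒢)
    (v : Fin m → V) (hv : Function.Injective v)
    (W : Set V) (hW : W.Nonempty) (hdisj : ∀ i, v i ∉ W)
    (hindep : ∀ i j : Fin m, i < j →
      ∀ w ∈ W ∪ v '' {k | j < k}, ∀ w' ∈ W ∪ v '' {k | j < k},
        (({v i, v j, w} : Finset V) ∈ 𝒢 ↔ ({v i, v j, w'} : Finset V) ∈ 𝒢)) :
    (∀ S : Finset (Fin m), S.card = s →
      (∀ i ∈ S, ∀ j ∈ S, i < j →
        ∀ w ∈ W ∪ v '' {k | j < k}, ({v i, v j, w} : Finset V) ∈ 𝒢) →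
      ∀ w ∈ W, ∀ e : Finset V, e ⊆ insert w (S.image v) → e.card = 3 → e ∈ 𝒢) ∧
    ¬∃ S : Finset (Fin m), S.card = s ∧
      ∀ i ∈ S, ∀ j ∈ S, i < j →
        ∀ w ∈ W ∪ v '' {k | j < k}, ({v i, v j, w} : Finset V) ∈ 𝒢 := by
  have main : ∀ S : Finset (Fin m), S.card = s →
      (∀ i ∈ S, ∀ j ∈ S, i < j →
        ∀ w ∈ W ∪ v '' {k | j < k}, ({v i, v j, w} : Finset V) ∈ 𝒢) →
      ∀ w ∈ W, ∀ e : Finset V, e ⊆ insert w (S.image v) → e.card = 3 → e ∈ 𝒢 := by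
    intro S hS hcl w hw e he hce
    by_cases hwe : w ∈ e
    · -- e contains w, so e = {v a, v b, w}
      have h2 : (e.erase w).card = 2 := by
        rw [Finset.card_erase_of_mem hwe, hce]
      obtain ⟨x, y, hxy, hxy2⟩ := Finset.card_eq_two.mp h2
      have hxe : x ∈ e.erase w := by rw [hxy2]; simp
      have hye : y ∈ e.erase w := by rw [hxy2]; simp
      have hx : x ∈ S.image v := by
        rcases Finset.mem_insert.mp (he (Finset.erase_subset w e hxe)) with h | h
        · exact absurd h (Finset.mem_erase.mp hxe).1
        · exact h
      have hy : y ∈ S.image v := by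
        rcases Finset.mem_insert.mp (he (Finset.erase_subset w e hye)) with h | h
        · exact absurd h (Finset.mem_erase.mp hye).1
        · exact h
      obtain ⟨a, ha, rfl⟩ := Finset.mem_image.mp hx
      obtain ⟨b, hb, rfl⟩ := Finset.mem_image.mp hy
      have hab : a ≠ b := fun h => hxy (by rw [h])
      have hew : e = insert w (e.erase w) := (Finset.insert_erase hwe).symm
      rcases lt_or_gt_of_ne hab with h | h
      · have := hcl a ha b hb h w (Or.inl hw)
        have heq : e = {v a, v b, w} := by
          rw [hew, hxy2]; ext z; simp; tauto
        rwa [heq]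
      · have := hcl b hb a ha h w (Or.inl hw)
        have heq : e = {v b, v a, w} := by
          rw [hew, hxy2]; ext z; simp; tauto
        rwa [heq]
    · -- e ⊆ S.image v
      have he' : e ⊆ S.image v := fun z hz =>
        (Finset.mem_insert.mp (he hz)).resolve_left (fun h => hwe (h ▸ hz))
      obtain ⟨x, y, z, hxy, hxz, hyz, hexyz⟩ := Finset.card_eq_three.mp hce
      have hx := Finset.mem_image.mp (he' (by rw [hexyz]; simp : x ∈ e))
      obtain ⟨a, ha, rfl⟩ := hx
      have hy := Finset.mem_image.mp (he' (by rw [hexyz]; simp : y ∈ e))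
      obtain ⟨b, hb, rfl⟩ := hy
      have hz := Finset.mem_image.mp (he' (by rw [hexyz]; simp : z ∈ e))
      obtain ⟨c, hc, rfl⟩ := hz
      have hab : a ≠ b := fun h => hxy (by rw [h])
      have hac : a ≠ c := fun h => hxz (by rw [h])
      have hbc : b ≠ c := fun h => hyz (by rw [h])
      obtain ⟨i, j, k, hij, hjk, heq⟩ := exists_sorted3' a b c hab hac hbc
      have hmemS : ∀ l : Fin m, l ∈ ({i, j, k} : Finset (Fin m)) → l ∈ S := by
        intro l hl
        rw [← heq] at hl
        rcases Finset.mem_insert.mp hl with rfl | hl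
        · exact ha
        rcases Finset.mem_insert.mp hl with rfl | hl
        · exact hb
        · rw [Finset.mem_singleton.mp hl]; exact hc
      have hi : i ∈ S := hmemS i (by simp)
      have hj : j ∈ S := hmemS j (by simp)
      have hk : k ∈ S := hmemS k (by simp)
      have hG := hcl i hi j hj hij (v k) (Or.inr ⟨k, hjk, rfl⟩)
      have himg : e = ({v i, v j, v k} : Finset V) := by
        have : Finset.image v {a, b, c} = Finset.image v {i, j, k} := by rw [heq]
        simpa [Finset.image_insert, hexyz] using this
      rwa [himg]
  refine ⟨main, ?_⟩
  rintro ⟨S, hS, hcl⟩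
  obtain ⟨w, hw⟩ := hW
  apply hfree
  refine ⟨insert w (S.image v), ?_, fun e he hce => main S hS hcl w hw e he hce⟩
  have hwS : w ∉ S.image v := by
    intro h
    obtain ⟨i, _, rfl⟩ := Finset.mem_image.mp h
    exact hdisj i hw
  rw [Finset.card_insert_of_notMem hwS, Finset.card_image_of_injective S hv, hS]
end
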